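/- arXiv:2405.07628 — 11 statements merged into one kernel-verified Lean document; each statement's English description precedes it below -/
import Mathlib

section
/- Every M₀-function is diagonal isotone: if Q : ℝ^n → ℝ^n is a Z-function that is weakly nonreversing, then for each coordinate z, Q_z(p) is nondecreasing in p_z. -/
/-- Every M₀-function (weakly nonreversing Z-function) is diagonal isotone. -/
theorem m0_function_diagonal_isotone {n : ℕ}
    (Q : (Fin n → ℝ) → (Fin n → ℝ))
    (hZ : ∀ (z : Fin n) (p q : Fin n → ℝ), p z = q z → p ≤ q → Q q z ≤ Q p z)
    (hweak : ∀ p p' : Fin n → ℝ, p' ≤ p → Q p ≤ Q p' → Q p = Q p') :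
    ∀ (z : Fin n) (p : Fin n → ℝ), Monotone (fun π => Q (Function.update p z π) z) := by
  intro z p π₁ π₂ hπ
  set a := Function.update p z π₁ with ha
  set b := Function.update p z π₂ with hb
  have hab : a ≤ b := by
    intro w
    by_cases hw : w = z
    · subst hw; simp [ha, hb, hπ]
    · simp [ha, hb, Function.update_of_ne hw]
  by_contra h
  push_neg at h
  have hQ : Q b ≤ Q a := by
    intro w
    by_cases hw : w = z
    · subst hw; exact le_of_lt h
    · exact hZ w a b (by simp [ha, hb, Function.update_of_ne hw]) hab
  have := hweak b a hab hQ
  exact absurd (congrFun this z) (ne_of_lt h)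
end

section
/- A Z-function Q : ℝ^n → ℝ^n is an M-function (i.e., strongly nonreversing) if and only if it is inverse isotone: Q(p) ≤ Q(p') implies p ≤ p'. -/
/-- A Z-function is an M-function (strongly nonreversing) iff it is inverse isotone. -/
theorem m_function_iff_inverse_isotone {n : ℕ}
    (Q : (Fin n → ℝ) → (Fin n → ℝ))
    (hZ : ∀ (z : Fin n) (p q : Fin n → ℝ), p z = q z → p ≤ q → Q q z ≤ Q p z) :
    (∀ p p' : Fin n → ℝ, p' ≤ p → Q p ≤ Q p' → p = p') ↔
    (∀ p p' : Fin n → ℝ, Q p ≤ Q p' → p ≤ p') := by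
  constructor
  · intro hM p p' hQ
    set r : Fin n → ℝ := fun i => max (p i) (p' i) with hr
    have hpr : p ≤ r := fun i => le_max_left _ _
    have hp'r : p' ≤ r := fun i => le_max_right _ _
    have hQr : Q r ≤ Q p' := by
      intro z
      rcases le_total (p z) (p' z) with h | h
      · exact hZ z p' r (by simp [hr, max_eq_right h]) hp'r
      · exact le_trans (hZ z p r (by simp [hr, max_eq_left h]) hpr) (hQ z)
    have := hM r p' hp'r hQr
    calc p ≤ r := hpr
      _ = p' := this
  · intro hI p p' hle hQ
    exact le_antisymm (hI p p' hQ) hle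
end

section
/- A Z-function Q : ℝ^n → ℝ^n is an M₀-function (i.e., weakly nonreversing) if and only if Q(p) ≤ Q(p') implies both Q(p ∧ p') = Q(p) and Q(p ∨ p') = Q(p'), where ∧ and ∨ denote componentwise minimum and maximum. -/
/-- A Z-function is an M₀-function (weakly nonreversing) iff `Q p ≤ Q p'` implies
`Q (p ⊓ p') = Q p` and `Q (p ⊔ p') = Q p'`. -/
theorem m0_function_iff_strong_set_order {n : ℕ}
    (Q : (Fin n → ℝ) → (Fin n → ℝ))
    (hZ : ∀ (z : Fin n) (p q : Fin n → ℝ), p z = q z → p ≤ q → Q q z ≤ Q p z) :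
    (∀ p p' : Fin n → ℝ, p' ≤ p → Q p ≤ Q p' → Q p = Q p') ↔
    (∀ p p' : Fin n → ℝ, Q p ≤ Q p' → Q (p ⊓ p') = Q p ∧ Q (p ⊔ p') = Q p') := by
  constructor
  · intro hW p p' hQ
    have hm : Q p ≤ Q (p ⊓ p') := by
      intro z
      rcases le_total (p z) (p' z) with h | h
      · exact hZ z (p ⊓ p') p (by simp [Pi.inf_apply, inf_eq_left.mpr h]) inf_le_left
      · exact (hQ z).trans
          (hZ z (p ⊓ p') p' (by simp [Pi.inf_apply, inf_eq_right.mpr h]) inf_le_right)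
    have hM : Q (p ⊔ p') ≤ Q p' := by
      intro z
      rcases le_total (p z) (p' z) with h | h
      · exact hZ z p' (p ⊔ p') (by simp [Pi.sup_apply, sup_eq_right.mpr h]) le_sup_right
      · exact (hZ z p (p ⊔ p') (by simp [Pi.sup_apply, sup_eq_left.mpr h]) le_sup_left).trans
          (hQ z)
    exact ⟨(hW p (p ⊓ p') inf_le_left hm).symm, hW (p ⊔ p') p' le_sup_right hM⟩
  · intro h p p' hle hQ
    have h1 := (h p p' hQ).1
    rw [inf_eq_right.mpr hle] at h1
    exact h1.symm
end

section
/- If Q : ℝ^n → ℝ^n is an M₀-function, then the set of solutions {p : Q(p) = 0} is closed under componentwise minimum and maximum: if Q(p) = 0 and Q(p') = 0 then Q(p ∧ p') = 0 and Q(p ∨ p') = 0. -/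
/-- The set of solutions of an M₀-function is stable by componentwise min and max. -/
theorem m0_solutions_lattice {n : ℕ}
    (Q : (Fin n → ℝ) → (Fin n → ℝ))
    (hZ : ∀ (z : Fin n) (p q : Fin n → ℝ), p z = q z → p ≤ q → Q q z ≤ Q p z)
    (hweak : ∀ p p' : Fin n → ℝ, p' ≤ p → Q p ≤ Q p' → Q p = Q p')
    (p p' : Fin n → ℝ) (hp : Q p = 0) (hp' : Q p' = 0) :
    Q (p ⊓ p') = 0 ∧ Q (p ⊔ p') = 0 := by
  constructor
  · have hm : (0 : Fin n → ℝ) ≤ Q (p ⊓ p') := by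
      intro z
      rcases min_cases (p z) (p' z) with ⟨h, _⟩ | ⟨h, _⟩
      · have := hZ z (p ⊓ p') p h inf_le_left
        simpa [hp] using this
      · have := hZ z (p ⊓ p') p' h inf_le_right
        simpa [hp'] using this
    have := hweak p (p ⊓ p') inf_le_left (hp ▸ hm)
    rw [← this, hp]
  · have hm : Q (p ⊔ p') ≤ 0 := by
      intro z
      rcases max_cases (p z) (p' z) with ⟨h, _⟩ | ⟨h, _⟩
      · have := hZ z p (p ⊔ p') h.symm le_sup_left
        simpa [hp] using this
      · have := hZ z p' (p ⊔ p') h.symm le_sup_right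
        simpa [hp'] using this
    have := hweak (p ⊔ p') p le_sup_left (hp ▸ hm)
    rw [this, hp]
end

section
/- If Q : ℝ^n → ℝ^n is an M-function, the equation Q(p) = 0 has at most one solution. -/
/-- If `Q` is an M-function, the equation `Q p = 0` has at most one solution. -/
theorem m_function_unique_solution {n : ℕ}
    (Q : (Fin n → ℝ) → (Fin n → ℝ))
    (hZ : ∀ (z : Fin n) (p q : Fin n → ℝ), p z = q z → p ≤ q → Q q z ≤ Q p z)
    (hstrong : ∀ p p' : Fin n → ℝ, p' ≤ p → Q p ≤ Q p' → p = p')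
    (p p' : Fin n → ℝ) (hp : Q p = 0) (hp' : Q p' = 0) :
    p = p' := by
  set q : Fin n → ℝ := fun i => max (p i) (p' i) with hq
  have hpq : p ≤ q := fun i => le_max_left _ _
  have hp'q : p' ≤ q := fun i => le_max_right _ _
  have hQq : ∀ z, Q q z ≤ 0 := by
    intro z
    rcases max_cases (p z) (p' z) with ⟨h1, _⟩ | ⟨h1, _⟩
    · have := hZ z p q h1.symm hpq
      simpa [hp] using this
    · have := hZ z p' q h1.symm hp'q
      simpa [hp'] using this
  have h1 : q = p := hstrong q p hpq (by intro z; simpa [hp] using hQq z)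
  have h2 : q = p' := hstrong q p' hp'q (by intro z; simpa [hp'] using hQq z)
  rw [← h1, h2]
end

section
/- Let Q : ℝ^n → ℝ^n be a continuous, responsive M-function, and assume a subsolution p̂⁰ (Q(p̂⁰) ≤ 0) and a supersolution p̌⁰ (Q(p̌⁰) ≥ 0) exist. Then a solution Q(p) = 0 exists, is unique, and the Jacobi sequence starting from p̂⁰ (or from p̌⁰) converges to that solution. -/
/-- Ortega–Rheinboldt: for a continuous responsive M-function with a subsolution and a
supersolution, a unique solution exists and the Jacobi sequences starting from the
subsolution and from the supersolution converge to it. -/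
theorem jacobi_converges_M_function {n : ℕ}
    (Q : (Fin n → ℝ) → (Fin n → ℝ))
    (hcont : Continuous Q)
    (hresp : ∀ (z : Fin n) (p : Fin n → ℝ),
      (∃ a : ℝ, Q (Function.update p z a) z < 0) ∧ (∃ b : ℝ, 0 < Q (Function.update p z b) z))
    (hZ : ∀ (z : Fin n) (p q : Fin n → ℝ), p z = q z → p ≤ q → Q q z ≤ Q p z)
    (hstrong : ∀ p p' : Fin n → ℝ, p' ≤ p → Q p ≤ Q p' → p = p')
    (phat pcheck : Fin n → ℝ)
    (hsub : Q phat ≤ 0) (hsup : 0 ≤ Q pcheck)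
    (seqhat seqcheck : ℕ → (Fin n → ℝ))
    (h0hat : seqhat 0 = phat) (h0check : seqcheck 0 = pcheck)
    (hjachat : ∀ (t : ℕ) (z : Fin n),
      IsLeast {π : ℝ | Q (Function.update (seqhat t) z π) z = 0} (seqhat (t + 1) z))
    (hjaccheck : ∀ (t : ℕ) (z : Fin n),
      IsLeast {π : ℝ | Q (Function.update (seqcheck t) z π) z = 0} (seqcheck (t + 1) z)) :
    ∃ p : Fin n → ℝ, Q p = 0 ∧ (∀ q : Fin n → ℝ, Q q = 0 → q = p) ∧
      Filter.Tendsto seqhat Filter.atTop (nhds p) ∧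
      Filter.Tendsto seqcheck Filter.atTop (nhds p) := by
  classical
  -- Comparison lemma: a subsolution is below a supersolution.
  have comp : ∀ x y : Fin n → ℝ, Q x ≤ 0 → 0 ≤ Q y → x ≤ y := by
    intro x y hx hy
    have hQw : Q (x ⊔ y) ≤ Q y := by
      intro i
      by_cases h : x i ≤ y i
      · exact hZ i y (x ⊔ y) (by simp [Pi.sup_apply, sup_eq_right.mpr h]) le_sup_right
      · have h1 : Q (x ⊔ y) i ≤ Q x i :=
          hZ i x (x ⊔ y) (by simp [Pi.sup_apply, sup_eq_left.mpr (le_of_not_ge h)]) le_sup_left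
        calc Q (x ⊔ y) i ≤ Q x i := h1
          _ ≤ 0 := hx i
          _ ≤ Q y i := hy i
    have := hstrong (x ⊔ y) y le_sup_right hQw
    exact sup_eq_right.mp this
  -- Step lemma for subsolutions: any root lies above the current value.
  have sub_step : ∀ (p : Fin n → ℝ) (z : Fin n) (π : ℝ), Q p ≤ 0 →
      Q (Function.update p z π) z = 0 → p z ≤ π := by
    intro p z π hp hroot
    by_contra hlt
    push_neg at hlt
    set u := Function.update p z π with hu
    have hule : u ≤ p := by
      intro w
      by_cases h : w = z
      · subst h; simpa [u] using hlt.le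
      · simp [u, Function.update_of_ne h]
    have hQle : Q p ≤ Q u := by
      intro w
      by_cases h : w = z
      · subst h; rw [hroot]; exact hp w
      · exact hZ w u p (by simp [u, Function.update_of_ne h]) hule
    have := hstrong p u hule hQle
    have : p z = π := by
      conv_lhs => rw [this]
      simp [u]
    exact absurd this (ne_of_gt hlt)
  -- Step lemma for supersolutions: any root lies below the current value.
  have sup_step : ∀ (p : Fin n → ℝ) (z : Fin n) (π : ℝ), 0 ≤ Q p →
      Q (Function.update p z π) z = 0 → π ≤ p z := by
    intro p z π hp hroot
    by_contra hlt
    push_neg at hlt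
    set u := Function.update p z π with hu
    have hple : p ≤ u := by
      intro w
      by_cases h : w = z
      · subst h; simpa [u] using hlt.le
      · simp [u, Function.update_of_ne h]
    have hQle : Q u ≤ Q p := by
      intro w
      by_cases h : w = z
      · subst h; rw [hroot]; exact hp w
      · exact hZ w p u (by simp [u, Function.update_of_ne h]) hple
    have := hstrong u p hple hQle
    have : π = p z := by
      conv_rhs => rw [← this]
      simp [u]
    exact absurd this (ne_of_gt hlt)
  -- seqhat stays a subsolution.
  have hQhat : ∀ t, Q (seqhat t) ≤ 0 := by
    intro t
    induction t with
    | zero => rwa [h0hat]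
    | succ t ih =>
      have hle : seqhat t ≤ seqhat (t + 1) := fun z => sub_step _ z _ ih (hjachat t z).1
      intro z
      have h1 : Function.update (seqhat t) z (seqhat (t + 1) z) ≤ seqhat (t + 1) := by
        intro w
        by_cases h : w = z
        · subst h; simp
        · simp only [Function.update_of_ne h]; exact hle w
      have h2 : Q (seqhat (t + 1)) z ≤ Q (Function.update (seqhat t) z (seqhat (t + 1) z)) z :=
        hZ z _ _ (by simp) h1
      calc Q (seqhat (t + 1)) z ≤ _ := h2
        _ = 0 := (hjachat t z).1
  have hQcheck : ∀ t, 0 ≤ Q (seqcheck t) := by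
    intro t
    induction t with
    | zero => rwa [h0check]
    | succ t ih =>
      have hle : seqcheck (t + 1) ≤ seqcheck t := fun z => sup_step _ z _ ih (hjaccheck t z).1
      intro z
      have h1 : seqcheck (t + 1) ≤ Function.update (seqcheck t) z (seqcheck (t + 1) z) := by
        intro w
        by_cases h : w = z
        · subst h; simp
        · simp only [Function.update_of_ne h]; exact hle w
      have h2 : Q (Function.update (seqcheck t) z (seqcheck (t + 1) z)) z ≤ Q (seqcheck (t + 1)) z :=
        hZ z _ _ (by simp) h1
      calc (0 : ℝ) = Q (Function.update (seqcheck t) z (seqcheck (t + 1) z)) z :=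
            ((hjaccheck t z).1).symm
        _ ≤ Q (seqcheck (t + 1)) z := h2
  -- monotonicity
  have hmonohat : Monotone seqhat :=
    monotone_nat_of_le_succ (fun t z => sub_step _ z _ (hQhat t) (hjachat t z).1)
  have hmonocheck : Antitone seqcheck :=
    antitone_nat_of_succ_le (fun t z => sup_step _ z _ (hQcheck t) (hjaccheck t z).1)
  -- bounds
  have hboundhat : ∀ t, seqhat t ≤ pcheck := fun t => comp _ _ (hQhat t) hsup
  have hboundcheck : ∀ t, phat ≤ seqcheck t := fun t => comp _ _ hsub (hQcheck t)
  -- limits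
  set plim : Fin n → ℝ := fun z => ⨆ t, seqhat t z with hplim
  set qlim : Fin n → ℝ := fun z => ⨅ t, seqcheck t z with hqlim
  have hconvhat : ∀ z, Filter.Tendsto (fun t => seqhat t z) Filter.atTop (nhds (plim z)) := by
    intro z
    exact tendsto_atTop_ciSup (fun a b hab => hmonohat hab z)
      ⟨pcheck z, by rintro _ ⟨t, rfl⟩; exact hboundhat t z⟩
  have hconvcheck : ∀ z, Filter.Tendsto (fun t => seqcheck t z) Filter.atTop (nhds (qlim z)) := by
    intro z
    exact tendsto_atTop_ciInf (fun a b hab => hmonocheck hab z)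
      ⟨phat z, by rintro _ ⟨t, rfl⟩; exact hboundcheck t z⟩
  have hThat : Filter.Tendsto seqhat Filter.atTop (nhds plim) := tendsto_pi_nhds.2 hconvhat
  have hTcheck : Filter.Tendsto seqcheck Filter.atTop (nhds qlim) := tendsto_pi_nhds.2 hconvcheck
  -- the limits are solutions
  have hroot : ∀ (s : ℕ → Fin n → ℝ) (l : Fin n → ℝ),
      Filter.Tendsto s Filter.atTop (nhds l) →
      (∀ t z, Q (Function.update (s t) z (s (t + 1) z)) z = 0) → Q l = 0 := by
    intro s l hTl hroots
    funext z
    have hu : Filter.Tendsto (fun t => Function.update (s t) z (s (t + 1) z))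
        Filter.atTop (nhds l) := by
      rw [tendsto_pi_nhds]
      intro w
      by_cases h : w = z
      · subst h
        simp only [Function.update_self]
        exact (tendsto_pi_nhds.1 hTl w).comp (Filter.tendsto_add_atTop_nat 1)
      · simp only [Function.update_of_ne h]
        exact tendsto_pi_nhds.1 hTl w
    have h1 : Filter.Tendsto (fun t => Q (Function.update (s t) z (s (t + 1) z)) z)
        Filter.atTop (nhds (Q l z)) :=
      tendsto_pi_nhds.1 ((hcont.tendsto l).comp hu) z
    have h2 : Filter.Tendsto (fun _ : ℕ => (0 : ℝ)) Filter.atTop (nhds (Q l z)) := by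
      simpa [hroots] using h1
    simpa using tendsto_nhds_unique h2 tendsto_const_nhds
  have hQplim : Q plim = 0 := hroot seqhat plim hThat (fun t z => (hjachat t z).1)
  have hQqlim : Q qlim = 0 := hroot seqcheck qlim hTcheck (fun t z => (hjaccheck t z).1)
  -- uniqueness
  have huniq : ∀ q : Fin n → ℝ, Q q = 0 → q = plim := by
    intro q hq
    exact le_antisymm (comp q plim (le_of_eq hq) (ge_of_eq hQplim))
      (comp plim q (le_of_eq hQplim) (ge_of_eq hq))
  have hql : qlim = plim := huniq qlim hQqlim
  exact ⟨plim, hQplim, huniq, hThat, hql ▸ hTcheck⟩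
end

section
/- Let Q : ℝ^n → ℝ^n be a continuous, responsive, surjective M-function. Then any Jacobi sequence (starting from an arbitrary point p⁰ ∈ ℝ^n) converges to the unique solution of Q(p) = 0. -/
/-- For a continuous, responsive, surjective M-function, any Jacobi sequence converges to
the unique solution of `Q p = 0`. -/
theorem jacobi_converges_surjective_M_function {n : ℕ}
    (Q : (Fin n → ℝ) → (Fin n → ℝ))
    (hcont : Continuous Q)
    (hresp : ∀ (z : Fin n) (p : Fin n → ℝ),
      (∃ a : ℝ, Q (Function.update p z a) z < 0) ∧ (∃ b : ℝ, 0 < Q (Function.update p z b) z))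
    (hZ : ∀ (z : Fin n) (p q : Fin n → ℝ), p z = q z → p ≤ q → Q q z ≤ Q p z)
    (hstrong : ∀ p p' : Fin n → ℝ, p' ≤ p → Q p ≤ Q p' → p = p')
    (hsurj : Function.Surjective Q)
    (seq : ℕ → (Fin n → ℝ))
    (hjac : ∀ (t : ℕ) (z : Fin n),
      IsLeast {π : ℝ | Q (Function.update (seq t) z π) z = 0} (seq (t + 1) z)) :
    ∃ p : Fin n → ℝ, Q p = 0 ∧ (∀ q : Fin n → ℝ, Q q = 0 → q = p) ∧
      Filter.Tendsto seq Filter.atTop (nhds p) := by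
  classical
  -- continuity in one coordinate
  have hcont1 : ∀ (p : Fin n → ℝ) (z : Fin n),
      Continuous fun π : ℝ => Q (Function.update p z π) z := by
    intro p z
    exact (continuous_apply z).comp (hcont.comp (continuous_const.update z continuous_id))
  -- strict monotonicity of the diagonal
  have hdiag : ∀ (p : Fin n → ℝ) (z : Fin n),
      StrictMono fun π : ℝ => Q (Function.update p z π) z := by
    intro p z a b hab
    have hle : Function.update p z a ≤ Function.update p z b := by
      intro w
      by_cases hw : w = z
      · subst hw; simp [hab.le]
      · simp [Function.update_of_ne hw]
    by_contra hcon
    push_neg at hcon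
    have hQle : Q (Function.update p z b) ≤ Q (Function.update p z a) := by
      intro w
      by_cases hw : w = z
      · subst hw; exact hcon
      · exact hZ w (Function.update p z a) (Function.update p z b)
          (by simp [Function.update_of_ne hw]) hle
    have heq := hstrong (Function.update p z b) (Function.update p z a) hle hQle
    have : b = a := by simpa using congrFun heq z
    exact ne_of_gt hab this
  -- existence of a zero in each coordinate
  have hex : ∀ (p : Fin n → ℝ) (z : Fin n), ∃ π : ℝ, Q (Function.update p z π) z = 0 := by
    intro p z
    obtain ⟨⟨a, ha⟩, ⟨b, hb⟩⟩ := hresp z p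
    have h0 : (0 : ℝ) ∈ Set.Icc (Q (Function.update p z a) z) (Q (Function.update p z b) z) :=
      ⟨ha.le, hb.le⟩
    obtain ⟨x, hx⟩ := intermediate_value_univ a b (hcont1 p z) h0
    exact ⟨x, hx⟩
  choose T hT using hex
  -- comparison lemma for zeros
  have hcomp : ∀ (p q : Fin n → ℝ) (z : Fin n) (a b : ℝ), p ≤ q →
      Q (Function.update p z a) z = 0 → Q (Function.update q z b) z = 0 → a ≤ b := by
    intro p q z a b hpq ha hb
    have h1 : Q (Function.update q z b) z ≤ Q (Function.update p z b) z := by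
      apply hZ z _ _ (by simp)
      intro w
      by_cases hw : w = z
      · subst hw; simp
      · simp only [Function.update_of_ne hw]; exact hpq w
    by_contra h
    push_neg at h
    have h2 : Q (Function.update p z b) z < Q (Function.update p z a) z := hdiag p z h
    rw [ha] at h2
    rw [hb] at h1
    linarith
  -- monotonicity of the Jacobi map T
  have hTmono : ∀ p q : Fin n → ℝ, p ≤ q → T p ≤ T q := fun p q h z =>
    hcomp p q z _ _ h (hT p z) (hT q z)
  -- inverse isotonicity
  have hinv : ∀ p q : Fin n → ℝ, Q p ≤ Q q → p ≤ q := by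
    intro p q hpq
    set r : Fin n → ℝ := fun z => min (p z) (q z) with hr
    have hrp : r ≤ p := fun z => min_le_left _ _
    have hrq : r ≤ q := fun z => min_le_right _ _
    have hQ : Q p ≤ Q r := by
      intro z
      rcases le_total (p z) (q z) with h | h
      · exact hZ z r p (min_eq_left h) hrp
      · exact le_trans (hpq z) (hZ z r q (min_eq_right h) hrq)
    have heq := hstrong p r hrp hQ
    intro z
    rw [heq]; exact hrq z
  -- the solution pstar
  obtain ⟨pstar, hpstar⟩ := hsurj 0
  have huniq : ∀ q : Fin n → ℝ, Q q = 0 → q = pstar := fun q hq =>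
    le_antisymm (hinv q pstar (by rw [hq, hpstar])) (hinv pstar q (by rw [hq, hpstar]))
  -- pstar is a fixed point of T
  have hTfix : T pstar = pstar := by
    funext z
    have h2 : Q (Function.update pstar z (pstar z)) z = 0 := by
      rw [Function.update_eq_self, hpstar]; rfl
    exact le_antisymm (hcomp pstar pstar z _ _ le_rfl (hT pstar z) h2)
      (hcomp pstar pstar z _ _ le_rfl h2 (hT pstar z))
  -- super/sub-solution step lemmas
  have hsuper_step : ∀ p : Fin n → ℝ, 0 ≤ Q p → T p ≤ p ∧ 0 ≤ Q (T p) := by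
    intro p hp
    have h1 : T p ≤ p := by
      intro z
      by_contra h
      push_neg at h
      have h2 : Q (Function.update p z (p z)) z < Q (Function.update p z (T p z)) z :=
        hdiag p z h
      rw [hT p z, Function.update_eq_self] at h2
      exact absurd (hp z) (not_le.mpr h2)
    refine ⟨h1, fun z => ?_⟩
    have h3 : Q (Function.update p z (T p z)) z ≤ Q (T p) z := by
      apply hZ z (T p) (Function.update p z (T p z)) (by simp)
      intro w
      by_cases hw : w = z
      · subst hw; simp
      · simp only [Function.update_of_ne hw]; exact h1 w
    rw [hT p z] at h3
    exact h3
  have hsub_step : ∀ p : Fin n → ℝ, Q p ≤ 0 → p ≤ T p ∧ Q (T p) ≤ 0 := by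
    intro p hp
    have h1 : p ≤ T p := by
      intro z
      by_contra h
      push_neg at h
      have h2 : Q (Function.update p z (T p z)) z < Q (Function.update p z (p z)) z :=
        hdiag p z h
      rw [hT p z, Function.update_eq_self] at h2
      exact absurd (hp z) (not_le.mpr h2)
    refine ⟨h1, fun z => ?_⟩
    have h3 : Q (T p) z ≤ Q (Function.update p z (T p z)) z := by
      apply hZ z (Function.update p z (T p z)) (T p) (by simp)
      intro w
      by_cases hw : w = z
      · subst hw; simp
      · simp only [Function.update_of_ne hw]; exact h1 w
    rw [hT p z] at h3
    exact h3
  -- construct super- and sub-solutions bounding seq 0 and pstar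
  obtain ⟨u, hu⟩ := hsurj (fun z => max (Q (seq 0) z) 0 + 1)
  have hupos : (0 : Fin n → ℝ) ≤ Q u := by
    intro z
    have h := congrFun hu z
    simp only [Pi.zero_apply, h]
    have := le_max_right (Q (seq 0) z) 0
    linarith
  have hu0 : seq 0 ≤ u := by
    apply hinv
    intro z
    have h := congrFun hu z
    simp only [h]
    have := le_max_left (Q (seq 0) z) 0
    linarith
  have hups : pstar ≤ u := hinv _ _ (by rw [hpstar]; exact hupos)
  obtain ⟨l, hl⟩ := hsurj (fun z => min (Q (seq 0) z) 0 - 1)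
  have hlneg : Q l ≤ (0 : Fin n → ℝ) := by
    intro z
    have h := congrFun hl z
    simp only [Pi.zero_apply, h]
    have := min_le_right (Q (seq 0) z) 0
    linarith
  have hl0 : l ≤ seq 0 := by
    apply hinv
    intro z
    have h := congrFun hl z
    simp only [h]
    have := min_le_left (Q (seq 0) z) 0
    linarith
  have hlps : l ≤ pstar := hinv _ _ (by rw [hpstar]; exact hlneg)
  -- iterated bounds
  have hUsuper : ∀ t : ℕ, (0 : Fin n → ℝ) ≤ Q (T^[t] u) := by
    intro t
    induction t with
    | zero => simpa using hupos
    | succ t ih => rw [Function.iterate_succ_apply']; exact (hsuper_step _ ih).2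
  have hLsub : ∀ t : ℕ, Q (T^[t] l) ≤ (0 : Fin n → ℝ) := by
    intro t
    induction t with
    | zero => simpa using hlneg
    | succ t ih => rw [Function.iterate_succ_apply']; exact (hsub_step _ ih).2
  have hUanti : ∀ t : ℕ, T^[t+1] u ≤ T^[t] u := by
    intro t
    rw [Function.iterate_succ_apply']
    exact (hsuper_step _ (hUsuper t)).1
  have hLmono : ∀ t : ℕ, T^[t] l ≤ T^[t+1] l := by
    intro t
    rw [Function.iterate_succ_apply']
    exact (hsub_step _ (hLsub t)).1
  have hUge : ∀ t : ℕ, pstar ≤ T^[t] u := by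
    intro t
    induction t with
    | zero => simpa using hups
    | succ t ih =>
      rw [Function.iterate_succ_apply']
      calc pstar = T pstar := hTfix.symm
        _ ≤ T (T^[t] u) := hTmono _ _ ih
  have hLle : ∀ t : ℕ, T^[t] l ≤ pstar := by
    intro t
    induction t with
    | zero => simpa using hlps
    | succ t ih =>
      rw [Function.iterate_succ_apply']
      calc T (T^[t] l) ≤ T pstar := hTmono _ _ ih
        _ = pstar := hTfix
  -- sandwich seq
  have hseqT : ∀ (t : ℕ) (z : Fin n), Q (Function.update (seq t) z (seq (t+1) z)) z = 0 :=
    fun t z => (hjac t z).1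
  have hseq_le : ∀ t : ℕ, seq t ≤ T^[t] u := by
    intro t
    induction t with
    | zero => simpa using hu0
    | succ t ih =>
      intro z
      rw [Function.iterate_succ_apply']
      exact hcomp (seq t) (T^[t] u) z _ _ ih (hseqT t z) (hT _ z)
  have hseq_ge : ∀ t : ℕ, T^[t] l ≤ seq t := by
    intro t
    induction t with
    | zero => simpa using hl0
    | succ t ih =>
      intro z
      rw [Function.iterate_succ_apply']
      exact hcomp (T^[t] l) (seq t) z _ _ ih (hT _ z) (hseqT t z)
  -- limits of the bounding sequences
  have hUbdd : ∀ z : Fin n, BddBelow (Set.range fun t => T^[t] u z) := by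
    intro z
    exact ⟨pstar z, by rintro x ⟨t, rfl⟩; exact hUge t z⟩
  have hLbdd : ∀ z : Fin n, BddAbove (Set.range fun t => T^[t] l z) := by
    intro z
    exact ⟨pstar z, by rintro x ⟨t, rfl⟩; exact hLle t z⟩
  set ubar : Fin n → ℝ := fun z => ⨅ t : ℕ, T^[t] u z with hubar
  set lbar : Fin n → ℝ := fun z => ⨆ t : ℕ, T^[t] l z with hlbar
  have hUlimz : ∀ z : Fin n,
      Filter.Tendsto (fun t => T^[t] u z) Filter.atTop (nhds (ubar z)) := by
    intro z
    exact tendsto_atTop_ciInf (antitone_nat_of_succ_le fun t => hUanti t z) (hUbdd z)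
  have hLlimz : ∀ z : Fin n,
      Filter.Tendsto (fun t => T^[t] l z) Filter.atTop (nhds (lbar z)) := by
    intro z
    exact tendsto_atTop_ciSup (monotone_nat_of_le_succ fun t => hLmono t z) (hLbdd z)
  have hUlim : Filter.Tendsto (fun t => T^[t] u) Filter.atTop (nhds ubar) :=
    tendsto_pi_nhds.mpr hUlimz
  have hLlim : Filter.Tendsto (fun t => T^[t] l) Filter.atTop (nhds lbar) :=
    tendsto_pi_nhds.mpr hLlimz
  -- limits are zeros of Q
  have hlimzero : ∀ (v : ℕ → Fin n → ℝ) (vbar : Fin n → ℝ),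
      (∀ t, v (t+1) = T (v t)) →
      Filter.Tendsto v Filter.atTop (nhds vbar) → Q vbar = 0 := by
    intro v vbar hvT hv
    funext z
    have h1 : Filter.Tendsto (fun t => Function.update (v t) z (v (t+1) z))
        Filter.atTop (nhds (Function.update vbar z (vbar z))) := by
      apply Filter.Tendsto.update hv z
      exact ((continuous_apply z).tendsto vbar).comp (hv.comp (Filter.tendsto_add_atTop_nat 1))
    have h2 : Filter.Tendsto (fun t => Q (Function.update (v t) z (v (t+1) z)) z)
        Filter.atTop (nhds (Q (Function.update vbar z (vbar z)) z)) :=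
      (((continuous_apply z).comp hcont).tendsto _).comp h1
    have h3 : (fun t => Q (Function.update (v t) z (v (t+1) z)) z) = fun _ => (0 : ℝ) := by
      funext t
      rw [hvT t]
      exact hT (v t) z
    rw [h3] at h2
    have h4 := tendsto_nhds_unique h2 tendsto_const_nhds
    rw [Function.update_eq_self] at h4
    simpa using h4
  have hUzero : Q ubar = 0 := by
    apply hlimzero (fun t => T^[t] u) ubar _ hUlim
    intro t
    exact Function.iterate_succ_apply' T t u
  have hLzero : Q lbar = 0 := by
    apply hlimzero (fun t => T^[t] l) lbar _ hLlim
    intro t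
    exact Function.iterate_succ_apply' T t l
  have hUeq : ubar = pstar := huniq _ hUzero
  have hLeq : lbar = pstar := huniq _ hLzero
  -- conclude
  refine ⟨pstar, hpstar, huniq, ?_⟩
  rw [tendsto_pi_nhds]
  intro z
  have hUz : Filter.Tendsto (fun t => T^[t] u z) Filter.atTop (nhds (pstar z)) := by
    have := hUlimz z; rwa [hUeq] at this
  have hLz : Filter.Tendsto (fun t => T^[t] l z) Filter.atTop (nhds (pstar z)) := by
    have := hLlimz z; rwa [hLeq] at this
  exact tendsto_of_tendsto_of_tendsto_of_le_of_le hLz hUz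
    (fun t => hseq_ge t z) (fun t => hseq_le t z)
end

section
/- Let Q(p) = Ap where A is an n×n real matrix with nonpositive off-diagonal entries. If A is weakly column diagonally dominant (1ᵀA ≥ 0, i.e., every column sum is nonnegative), then the map p ↦ Ap is weakly nonreversing; if 1ᵀA > 0 (every column sum strictly positive), then it is strongly nonreversing. -/
/-- For a linear map `p ↦ A.mulVec p` with nonpositive off-diagonal entries: weak column
diagonal dominance implies weak nonreversingness, strict column diagonal dominance implies
strong nonreversingness. -/
theorem linear_diag_dominant_nonreversing {n : ℕ}
    (A : Matrix (Fin n) (Fin n) ℝ)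
    (hoff : ∀ i j : Fin n, i ≠ j → A i j ≤ 0) :
    ((∀ j : Fin n, 0 ≤ ∑ i, A i j) →
      ∀ p p' : Fin n → ℝ, p' ≤ p → A.mulVec p ≤ A.mulVec p' → A.mulVec p = A.mulVec p') ∧
    ((∀ j : Fin n, 0 < ∑ i, A i j) →
      ∀ p p' : Fin n → ℝ, p' ≤ p → A.mulVec p ≤ A.mulVec p' → p = p') := by
  have key : ∀ p p' : Fin n → ℝ, p' ≤ p → A.mulVec p ≤ A.mulVec p' →
      (∀ i, A.mulVec (p - p') i ≤ 0) ∧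
      (∑ i, A.mulVec (p - p') i = ∑ j, (∑ i, A i j) * (p j - p' j)) := by
    intro p p' hle hAle
    constructor
    · intro i
      have : A.mulVec (p - p') i = A.mulVec p i - A.mulVec p' i := by
        simp [Matrix.mulVec_sub]
      rw [this]
      linarith [hAle i]
    · simp only [Matrix.mulVec, dotProduct]
      rw [Finset.sum_comm]
      exact Finset.sum_congr rfl fun j _ => by rw [Finset.sum_mul]; simp [Pi.sub_apply]
  constructor
  · intro hcol p p' hle hAle
    obtain ⟨h1, h2⟩ := key p p' hle hAle
    have hnn : 0 ≤ ∑ j, (∑ i, A i j) * (p j - p' j) :=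
      Finset.sum_nonneg fun j _ => mul_nonneg (hcol j) (by linarith [hle j])
    have hzero : ∑ i, A.mulVec (p - p') i = 0 :=
      le_antisymm (Finset.sum_nonpos fun i _ => h1 i) (h2 ▸ hnn)
    have hall : ∀ i ∈ Finset.univ, A.mulVec (p - p') i = 0 := by
      intro i hi
      have := (Finset.sum_eq_zero_iff_of_nonpos (fun i _ => h1 i)).mp hzero
      exact this i hi
    funext i
    have := hall i (Finset.mem_univ i)
    have heq : A.mulVec (p - p') i = A.mulVec p i - A.mulVec p' i := by
      simp [Matrix.mulVec_sub]
    rw [heq] at this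
    linarith
  · intro hcol p p' hle hAle
    obtain ⟨h1, h2⟩ := key p p' hle hAle
    have hnp : ∑ j, (∑ i, A i j) * (p j - p' j) ≤ 0 := by
      rw [← h2]; exact Finset.sum_nonpos fun i _ => h1 i
    have hnn : ∀ j ∈ Finset.univ, 0 ≤ (∑ i, A i j) * (p j - p' j) :=
      fun j _ => mul_nonneg (hcol j).le (by linarith [hle j])
    have hzero : ∑ j, (∑ i, A i j) * (p j - p' j) = 0 :=
      le_antisymm hnp (Finset.sum_nonneg hnn)
    have hall := (Finset.sum_eq_zero_iff_of_nonneg hnn).mp hzero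
    funext j
    have := hall j (Finset.mem_univ j)
    rcases mul_eq_zero.mp this with h | h
    · exact absurd h (ne_of_gt (hcol j))
    · linarith
end

section
/- The regularized-OT excess supply map Q : ℝ^{X∪Y} → ℝ^{X∪Y} defined by Q_x(p) = ∑_y exp(Φ_{xy} + p_x − p_y) − n_x for x ∈ X and Q_y(p) = −∑_x exp(Φ_{xy} + p_x − p_y) + m_y for y ∈ Y is an M₀-function but not an M-function: it is a Z-function and weakly nonreversing, yet adding a constant to all coordinates leaves Q unchanged, so it is not strongly nonreversing. -/
/-- The regularized optimal transport excess-supply map is an M₀-function but not an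
M-function: it is a Z-function, weakly nonreversing, invariant under adding a constant to
all coordinates, and hence not strongly nonreversing. -/
theorem regularized_OT_is_M0_not_M {X Y : Type*} [Fintype X] [Fintype Y]
    [Nonempty X] [Nonempty Y]
    (Φ : X → Y → ℝ) (nn : X → ℝ) (m : Y → ℝ)
    (Q : ((X ⊕ Y) → ℝ) → ((X ⊕ Y) → ℝ))
    (hQx : ∀ (p : (X ⊕ Y) → ℝ) (x : X),
      Q p (Sum.inl x) = (∑ y, Real.exp (Φ x y + p (Sum.inl x) - p (Sum.inr y))) - nn x)
    (hQy : ∀ (p : (X ⊕ Y) → ℝ) (y : Y),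
      Q p (Sum.inr y) = -(∑ x, Real.exp (Φ x y + p (Sum.inl x) - p (Sum.inr y))) + m y) :
    (∀ (z : X ⊕ Y) (p q : (X ⊕ Y) → ℝ), p z = q z → p ≤ q → Q q z ≤ Q p z) ∧
    (∀ p p' : (X ⊕ Y) → ℝ, p' ≤ p → Q p ≤ Q p' → Q p = Q p') ∧
    (∀ (p : (X ⊕ Y) → ℝ) (c : ℝ), Q (fun z => p z + c) = Q p) ∧
    ¬ (∀ p p' : (X ⊕ Y) → ℝ, p' ≤ p → Q p ≤ Q p' → p = p') := by
  have key : ∀ p : (X ⊕ Y) → ℝ, ∑ z, Q p z = ∑ y, m y - ∑ x, nn x := by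
    intro p
    rw [Fintype.sum_sum_type]
    simp only [hQx, hQy, Finset.sum_sub_distrib, Finset.sum_add_distrib, Finset.sum_neg_distrib]
    rw [Finset.sum_comm]
    ring
  have hinv : ∀ (p : (X ⊕ Y) → ℝ) (c : ℝ), Q (fun z => p z + c) = Q p := by
    intro p c
    funext z
    cases z with
    | inl x =>
      rw [hQx, hQx]
      congr 1
      apply Finset.sum_congr rfl
      intro y _; congr 1; ring
    | inr y =>
      rw [hQy, hQy]
      congr 2
      apply Finset.sum_congr rfl
      intro x _; congr 1; ring
  refine ⟨?_, ?_, hinv, ?_⟩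
  · intro z p q hz hpq
    cases z with
    | inl x =>
      rw [hQx, hQx]
      have : ∀ y ∈ Finset.univ, Real.exp (Φ x y + q (Sum.inl x) - q (Sum.inr y)) ≤
          Real.exp (Φ x y + p (Sum.inl x) - p (Sum.inr y)) := by
        intro y _
        apply Real.exp_le_exp.2
        have h1 := hpq (Sum.inr y)
        linarith [hz]
      linarith [Finset.sum_le_sum this]
    | inr y =>
      rw [hQy, hQy]
      have : ∀ x ∈ Finset.univ, Real.exp (Φ x y + p (Sum.inl x) - p (Sum.inr y)) ≤
          Real.exp (Φ x y + q (Sum.inl x) - q (Sum.inr y)) := by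
        intro x _
        apply Real.exp_le_exp.2
        have h1 := hpq (Sum.inl x)
        linarith [hz]
      linarith [Finset.sum_le_sum this]
  · intro p p' _ hle
    have hsum : ∑ z, Q p z = ∑ z, Q p' z := by rw [key, key]
    funext z
    exact (Finset.sum_eq_sum_iff_of_le (fun i _ => hle i)).1 hsum z (Finset.mem_univ z)
  · intro h
    have h1 := h (fun z => (fun _ : X ⊕ Y => (0:ℝ)) z + 1) (fun _ => (0:ℝ))
      (fun z => by simp) (by rw [hinv])
    have := congrFun h1 (Sum.inl (Classical.arbitrary X))
    simp at this
end

section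
/- For the piecewise-linear-tax feasible set F = {(U,V) ∈ ℝ² : N(γ − V) ≥ U − α} where N(w) = min_{k=0,…,K} (1−τ_k)(w − w_k) with 0 = τ_0 < τ_1 < … < τ_K < 1, the distance-to-frontier function is D(U,V) = max_{k} [U − α + (1−τ_k)(V − γ + w_k)] / (2 − τ_k). -/
/-- For the piecewise-linear-tax feasible set `{(U,V) : N (γ - V) ≥ U - α}` with
`N w = min_k (1 - τ k) * (w - wk k)`, the distance-to-frontier function is
`max_k (U - α + (1 - τ k) * (V - γ + wk k)) / (2 - τ k)`. -/
theorem distance_to_frontier_piecewise_linear_taxes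
    (K : ℕ) (τ wk : Fin (K + 1) → ℝ)
    (hτ0 : τ 0 = 0) (hτmono : StrictMono τ) (hτlt : ∀ k, τ k < 1)
    (α γ U V : ℝ) :
    IsLeast
      {t : ℝ | U - t - α ≤
        Finset.univ.inf' Finset.univ_nonempty
          (fun k => (1 - τ k) * ((γ - (V - t)) - wk k))}
      (Finset.univ.sup' Finset.univ_nonempty
        (fun k => (U - α + (1 - τ k) * (V - γ + wk k)) / (2 - τ k))) := by
  have h2 : ∀ k : Fin (K + 1), 0 < 2 - τ k := fun k => by linarith [hτlt k]
  have key : ∀ t : ℝ,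
      (U - t - α ≤ Finset.univ.inf' Finset.univ_nonempty
        (fun k => (1 - τ k) * ((γ - (V - t)) - wk k))) ↔
      ∀ k : Fin (K + 1),
        (U - α + (1 - τ k) * (V - γ + wk k)) / (2 - τ k) ≤ t := by
    intro t
    rw [Finset.le_inf'_iff]
    constructor
    · intro h k
      rw [div_le_iff₀ (h2 k)]
      have := h k (Finset.mem_univ k)
      nlinarith
    · intro h k _
      have := h k
      rw [div_le_iff₀ (h2 k)] at this
      nlinarith
  constructor
  · rw [Set.mem_setOf_eq, key]
    intro k
    exact Finset.le_sup' (fun k => (U - α + (1 - τ k) * (V - γ + wk k)) / (2 - τ k)) (Finset.mem_univ k)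
  · intro t ht
    rw [Set.mem_setOf_eq, key] at ht
    exact Finset.sup'_le _ _ fun k _ => ht k
end

section
/- Given two stable outcomes (μ,u,v) and (μ',u',v') in a one-to-one matching market with no indifference (with |I| = |J| and all payoffs positive so that all agents are matched), define (μ ∧_I μ')_{ij} = μ_{ij} if u_i ≤ u'_i and μ'_{ij} otherwise, and (μ ∨_I μ')_{ij} = μ_{ij} if u_i > u'_i and μ'_{ij} otherwise. Then μ ∧_I μ' and μ ∨_I μ' are stable matchings, with associated worker utilities u ∧ u' and u ∨ u' respectively (Knuth's lattice property). -/
/-- A one-to-one matching outcome `(μ, u, v)` (everyone matched). -/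
def IsStableOutcome {I J : Type*} (α : I → J → ℝ) (γ : I → J → ℝ)
    (μ : I → J → Prop) (u : I → ℝ) (v : J → ℝ) : Prop :=
  (∀ i, ∃! j, μ i j) ∧ (∀ j, ∃! i, μ i j) ∧
  (∀ i j, α i j ≤ u i ∨ γ i j ≤ v j) ∧
  (∀ i j, μ i j → u i = α i j ∧ v j = γ i j)

section Aux

variable {I J : Type*}

/-- If a worker strictly prefers `μ'`, then its `μ'`-partner strictly prefers `μ`. -/
private lemma stepA {α γ : I → J → ℝ}
    (hγni : ∀ j, Function.Injective (fun i => γ i j))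
    {μ μ' : I → J → Prop} {u u' : I → ℝ} {v v' : J → ℝ}
    (h : IsStableOutcome α γ μ u v) (h' : IsStableOutcome α γ μ' u' v')
    {i : I} {j : J} (hij : μ' i j) (hu : u i < u' i) : v' j < v j := by
  obtain ⟨hα', hγ'⟩ := h'.2.2.2 i j hij
  rcases h.2.2.1 i j with hb | hb
  · exact absurd hb (not_le.mpr (hα' ▸ hu))
  · rcases lt_or_eq_of_le (hγ' ▸ hb : v' j ≤ v j) with hlt | heq
    · exact hlt
    · exfalso
      obtain ⟨i0, hi0, -⟩ := h.2.1 j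
      obtain ⟨hα0, hγ0⟩ := h.2.2.2 i0 j hi0
      have hii : i0 = i := hγni j (show γ i0 j = γ i j by rw [← hγ0, ← heq, hγ'])
      subst hii
      have : u i0 = u' i0 := by rw [hα0, ← hα']
      exact absurd this (ne_of_lt hu)

/-- If a firm strictly prefers `μ`, then its `μ`-partner strictly prefers `μ'`. -/
private lemma stepB {α γ : I → J → ℝ}
    (hαni : ∀ i, Function.Injective (α i))
    {μ μ' : I → J → Prop} {u u' : I → ℝ} {v v' : J → ℝ}
    (h : IsStableOutcome α γ μ u v) (h' : IsStableOutcome α γ μ' u' v')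
    {i : I} {j : J} (hij : μ i j) (hv : v' j < v j) : u i < u' i := by
  obtain ⟨hα, hγ⟩ := h.2.2.2 i j hij
  rcases h'.2.2.1 i j with hb | hb
  · rcases lt_or_eq_of_le (hα ▸ hb : u i ≤ u' i) with hlt | heq
    · exact hlt
    · exfalso
      obtain ⟨j0, hj0, -⟩ := h'.1 i
      obtain ⟨hα0, hγ0⟩ := h'.2.2.2 i j0 hj0
      have hjj : j0 = j := hαni i (show α i j0 = α i j by rw [← hα0, ← heq, hα])
      subst hjj
      have : v j0 = v' j0 := by rw [hγ, ← hγ0]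
      exact absurd this (ne_of_gt hv)
  · exact absurd hb (not_le.mpr (hγ ▸ hv))

/-- Decomposition lemma: for a matched pair of `μ'`, the worker strictly prefers `μ'`
iff the firm strictly prefers `μ`. -/
private lemma decomp [Fintype I] [Fintype J] {α γ : I → J → ℝ}
    (hαni : ∀ i, Function.Injective (α i))
    (hγni : ∀ j, Function.Injective (fun i => γ i j))
    {μ μ' : I → J → Prop} {u u' : I → ℝ} {v v' : J → ℝ}
    (h : IsStableOutcome α γ μ u v) (h' : IsStableOutcome α γ μ' u' v')
    {i : I} {j : J} (hij : μ' i j) : u i < u' i ↔ v' j < v j := by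
  classical
  constructor
  · exact stepA hγni h h' hij
  · intro hv
    set f' : I → J := fun i => (h'.1 i).choose with hf'
    have hf'spec : ∀ i, μ' i (f' i) := fun i => (h'.1 i).choose_spec.1
    have hf'inj : Function.Injective f' := fun a b hab =>
      (h'.2.1 (f' a)).unique (hf'spec a) (hab ▸ hf'spec b)
    set g : J → I := fun j => (h.2.1 j).choose with hg
    have hgspec : ∀ j, μ (g j) j := fun j => (h.2.1 j).choose_spec.1
    have hginj : Function.Injective g := fun a b hab =>
      (h.1 (g a)).unique (hgspec a) (hab ▸ hgspec b)
    set A : Finset I := Finset.univ.filter (fun i => u i < u' i) with hA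
    set B : Finset J := Finset.univ.filter (fun j => v' j < v j) with hB
    have hAB : ∀ a ∈ A, f' a ∈ B := by
      intro a ha
      simp only [hA, Finset.mem_filter, Finset.mem_univ, true_and] at ha
      simp only [hB, Finset.mem_filter, Finset.mem_univ, true_and]
      exact stepA hγni h h' (hf'spec a) ha
    have hBA : ∀ b ∈ B, g b ∈ A := by
      intro b hb
      simp only [hB, Finset.mem_filter, Finset.mem_univ, true_and] at hb
      simp only [hA, Finset.mem_filter, Finset.mem_univ, true_and]
      exact stepB hαni h h' (hgspec b) hb
    have hcard1 : A.card ≤ B.card :=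
      Finset.card_le_card_of_injOn f' hAB (hf'inj.injOn)
    have hcard2 : B.card ≤ A.card :=
      Finset.card_le_card_of_injOn g hBA (hginj.injOn)
    have himg : A.image f' = B := by
      apply Finset.eq_of_subset_of_card_le
      · intro x hx
        obtain ⟨a, ha, rfl⟩ := Finset.mem_image.mp hx
        exact hAB a ha
      · rwa [Finset.card_image_of_injective _ hf'inj]
    have hjB : j ∈ B := by
      simp only [hB, Finset.mem_filter, Finset.mem_univ, true_and]; exact hv
    rw [← himg] at hjB
    obtain ⟨a, ha, haj⟩ := Finset.mem_image.mp hjB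
    have : a = i := (h'.2.1 j).unique (haj ▸ hf'spec a) hij
    subst this
    simpa only [hA, Finset.mem_filter, Finset.mem_univ, true_and] using ha

/-- If `μ' i j` and `u i = u' i`, then also `μ i j`. -/
private lemma eq_transfer {α γ : I → J → ℝ}
    (hαni : ∀ i, Function.Injective (α i))
    {μ μ' : I → J → Prop} {u u' : I → ℝ} {v v' : J → ℝ}
    (h : IsStableOutcome α γ μ u v) (h' : IsStableOutcome α γ μ' u' v')
    {i : I} {j : J} (hij : μ' i j) (he : u i = u' i) : μ i j := by
  have hα' := (h'.2.2.2 i j hij).1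
  obtain ⟨j0, hj0, -⟩ := h.1 i
  have hα := (h.2.2.2 i j0 hj0).1
  have : j0 = j := hαni i (by rw [← hα, he, hα'])
  exact this ▸ hj0

/-- A left-total, co-injective relation between equinumerous fintypes is right-total. -/
private lemma full [Fintype I] [Fintype J] (hcard : Fintype.card I = Fintype.card J)
    {ν : I → J → Prop} (hex : ∀ i, ∃! j, ν i j)
    (hinj : ∀ ⦃i1 i2 : I⦄ ⦃j : J⦄, ν i1 j → ν i2 j → i1 = i2) :
    ∀ j, ∃! i, ν i j := by
  classical
  set F : I → J := fun i => (hex i).choose with hF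
  have hFspec : ∀ i, ν i (F i) := fun i => (hex i).choose_spec.1
  have hFinj : Function.Injective F := fun a b hab => hinj (hFspec a) (hab ▸ hFspec b)
  have hFsurj : Function.Surjective F :=
    ((Fintype.bijective_iff_injective_and_card F).mpr ⟨hFinj, hcard⟩).2
  intro j
  obtain ⟨i, rfl⟩ := hFsurj j
  exact ⟨i, hFspec i, fun y hy => hinj hy (hFspec i)⟩

end Aux

/-- Knuth's lattice property: given two stable outcomes, the worker-wise meet and join of
the matchings are stable matchings whose worker utilities are `u ⊓ u'` and `u ⊔ u'`. -/
theorem knuth_lattice {I J : Type*} [Fintype I] [Fintype J]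
    (α : I → J → ℝ) (γ : I → J → ℝ)
    (hcard : Fintype.card I = Fintype.card J)
    (hαpos : ∀ i j, 0 < α i j) (hγpos : ∀ i j, 0 < γ i j)
    (hαni : ∀ i, Function.Injective (α i))
    (hγni : ∀ j, Function.Injective (fun i => γ i j))
    (μ μ' : I → J → Prop) (u u' : I → ℝ) (v v' : J → ℝ)
    (h : IsStableOutcome α γ μ u v) (h' : IsStableOutcome α γ μ' u' v') :
    (∃ w : J → ℝ, IsStableOutcome α γ
        (fun i j => if u i ≤ u' i then μ i j else μ' i j)
        (fun i => min (u i) (u' i)) w) ∧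
    (∃ w : J → ℝ, IsStableOutcome α γ
        (fun i j => if u' i < u i then μ i j else μ' i j)
        (fun i => max (u i) (u' i)) w) := by
  classical
  constructor
  · -- the meet, with firm utilities `max v v'`
    refine ⟨fun j => max (v j) (v' j), ?_, ?_, ?_, ?_⟩
    · intro i
      by_cases hi : u i ≤ u' i
      · simpa only [if_pos hi] using h.1 i
      · simpa only [if_neg hi] using h'.1 i
    · apply full hcard
      · intro i
        by_cases hi : u i ≤ u' i
        · simpa only [if_pos hi] using h.1 i
        · simpa only [if_neg hi] using h'.1 i
      · intro i1 i2 j h1 h2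
        split_ifs at h1 h2 with hc1 hc2 hc2
        · exact (h.2.1 j).unique h1 h2
        · -- μ i1 j, μ' i2 j, u i1 ≤ u' i1, u' i2 < u i2
          push_neg at hc2
          have hv1 : ¬ v j < v' j := fun hv =>
            absurd ((decomp hαni hγni h' h h1).mpr hv) (not_lt.mpr hc1)
          have hv2 : ¬ v' j < v j := fun hv =>
            absurd ((decomp hαni hγni h h' h2).mpr hv) (not_lt.mpr hc2.le)
          have hvv : v j = v' j := le_antisymm (not_lt.mp hv2) (not_lt.mp hv1)
          refine hγni j ?_
          show γ i1 j = γ i2 j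
          rw [← (h.2.2.2 i1 j h1).2, ← (h'.2.2.2 i2 j h2).2, hvv]
        · -- μ' i1 j, μ i2 j
          push_neg at hc1
          have hv1 : ¬ v j < v' j := fun hv =>
            absurd ((decomp hαni hγni h' h h2).mpr hv) (not_lt.mpr hc2)
          have hv2 : ¬ v' j < v j := fun hv =>
            absurd ((decomp hαni hγni h h' h1).mpr hv) (not_lt.mpr hc1.le)
          have hvv : v j = v' j := le_antisymm (not_lt.mp hv2) (not_lt.mp hv1)
          refine hγni j ?_
          show γ i1 j = γ i2 j
          rw [← (h'.2.2.2 i1 j h1).2, ← (h.2.2.2 i2 j h2).2, hvv]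
        · exact (h'.2.1 j).unique h1 h2
    · intro i j
      rcases h.2.2.1 i j with h1 | h1
      · rcases h'.2.2.1 i j with h2 | h2
        · exact Or.inl (le_min h1 h2)
        · exact Or.inr (le_max_of_le_right h2)
      · exact Or.inr (le_max_of_le_left h1)
    · intro i j hij
      split_ifs at hij with hc
      · obtain ⟨hα, hγ⟩ := h.2.2.2 i j hij
        have hvle : v' j ≤ v j := not_lt.mp fun hv =>
          absurd ((decomp hαni hγni h' h hij).mpr hv) (not_lt.mpr hc)
        exact ⟨by show min (u i) (u' i) = α i j; rw [min_eq_left hc]; exact hα,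
          by show max (v j) (v' j) = γ i j; rw [max_eq_left hvle]; exact hγ⟩
      · push_neg at hc
        obtain ⟨hα', hγ'⟩ := h'.2.2.2 i j hij
        have hvle : v j ≤ v' j := not_lt.mp fun hv =>
          absurd ((decomp hαni hγni h h' hij).mpr hv) (not_lt.mpr hc.le)
        exact ⟨by show min (u i) (u' i) = α i j; rw [min_eq_right hc.le]; exact hα',
          by show max (v j) (v' j) = γ i j; rw [max_eq_right hvle]; exact hγ'⟩
  · -- the join, with firm utilities `min v v'`
    refine ⟨fun j => min (v j) (v' j), ?_, ?_, ?_, ?_⟩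
    · intro i
      by_cases hi : u' i < u i
      · simpa only [if_pos hi] using h.1 i
      · simpa only [if_neg hi] using h'.1 i
    · apply full hcard
      · intro i
        by_cases hi : u' i < u i
        · simpa only [if_pos hi] using h.1 i
        · simpa only [if_neg hi] using h'.1 i
      · intro i1 i2 j h1 h2
        split_ifs at h1 h2 with hc1 hc2 hc2
        · exact (h.2.1 j).unique h1 h2
        · -- μ i1 j with u' i1 < u i1, μ' i2 j with u i2 ≤ u' i2
          push_neg at hc2
          have hv : v j < v' j := (decomp hαni hγni h' h h1).mp hc1
          have hne : ¬ u i2 < u' i2 := fun hu =>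
            absurd ((decomp hαni hγni h h' h2).mp hu) (asymm hv)
          have he : u i2 = u' i2 := le_antisymm hc2 (not_lt.mp hne)
          exact (h.2.1 j).unique h1 (eq_transfer hαni h h' h2 he)
        · push_neg at hc1
          have hv : v j < v' j := (decomp hαni hγni h' h h2).mp hc2
          have hne : ¬ u i1 < u' i1 := fun hu =>
            absurd ((decomp hαni hγni h h' h1).mp hu) (asymm hv)
          have he : u i1 = u' i1 := le_antisymm hc1 (not_lt.mp hne)
          exact (h.2.1 j).unique (eq_transfer hαni h h' h1 he) h2
        · exact (h'.2.1 j).unique h1 h2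
    · intro i j
      rcases h.2.2.1 i j with h1 | h1
      · exact Or.inl (le_max_of_le_left h1)
      · rcases h'.2.2.1 i j with h2 | h2
        · exact Or.inl (le_max_of_le_right h2)
        · exact Or.inr (le_min h1 h2)
    · intro i j hij
      split_ifs at hij with hc
      · obtain ⟨hα, hγ⟩ := h.2.2.2 i j hij
        have hvle : v j ≤ v' j := ((decomp hαni hγni h' h hij).mp hc).le
        exact ⟨by show max (u i) (u' i) = α i j; rw [max_eq_left hc.le]; exact hα,
          by show min (v j) (v' j) = γ i j; rw [min_eq_left hvle]; exact hγ⟩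
      · push_neg at hc
        obtain ⟨hα', hγ'⟩ := h'.2.2.2 i j hij
        have hvle : v' j ≤ v j := by
          rcases lt_or_eq_of_le hc with hlt | he
          · exact ((decomp hαni hγni h h' hij).mp hlt).le
          · have hμ : μ i j := eq_transfer hαni h h' hij he
            exact le_of_eq (by rw [hγ', ← (h.2.2.2 i j hμ).2])
        exact ⟨by show max (u i) (u' i) = α i j; rw [max_eq_right hc]; exact hα',
          by show min (v j) (v' j) = γ i j; rw [min_eq_right hvle]; exact hγ'⟩
end
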